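/- arXiv:2504.21329 — 4 statements merged into one kernel-verified Lean document; each statement's English description precedes it below -/
import Mathlib

section
/- Let (G, h) be a subdivided generic Reeb graph that admits a drawing with zero crossings in which every edge is an xy-monotone curve and every vertex v lies at y-coordinate h(v). Then there exists another zero-crossing drawing of (G, h) in which the vertices appear in the same left-to-right order of x-coordinates, every vertex v lies at y-coordinate h(v), and every edge is drawn as a straight line segment. -/
/-! Keep the `x`-coordinates and draw every edge as the segment between its endpoints. Since
edges join consecutive levels, two edges either meet only at the height of an endpoint of both,
where the meeting point is a shared vertex, or they span the same slab. Two segments in a common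
slab cross in its interior exactly when their endpoints appear in opposite orders at the bottom
and at the top, and then the original curves cross as well, by the intermediate value theorem. -/

open Set

/-- A drawing of a Reeb graph `(G, h)`: every vertex `v` is placed at the point
`(x v, h v)` in the plane (distinct vertices at distinct points), and every edge
`{v, w}` of `G` is drawn as the graph of a continuous function of the `y`-coordinate
over the height interval of its two endpoints; such a curve is a continuous
`y`-monotone curve joining the images of the endpoints (it meets every horizontal
line in at most one point). -/
structure ReebDrawing {V : Type*} (G : SimpleGraph V) (h : V → ℝ) where
  /-- the `x`-coordinate of each vertex -/
  x : V → ℝ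
  /-- distinct vertices are mapped to distinct points -/
  inj : Function.Injective fun v => ((x v, h v) : ℝ × ℝ)
  /-- for each edge, the `x`-coordinate of its curve as a function of the height `y` -/
  curve : Sym2 V → ℝ → ℝ
  curve_cont : ∀ e ∈ G.edgeSet, Continuous (curve e)
  curve_end : ∀ v w : V, G.Adj v w → curve s(v, w) (h v) = x v

namespace ReebDrawing

variable {V : Type*} {G : SimpleGraph V} {h : V → ℝ}

/-- The point of the plane where the vertex `v` is drawn. -/
def pos (D : ReebDrawing G h) (v : V) : ℝ × ℝ := (D.x v, h v)

/-- The set of points of the curve drawn for the edge `{v, w}`. -/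
def edgeCurve (D : ReebDrawing G h) (v w : V) : Set (ℝ × ℝ) :=
  {p | p.2 ∈ Set.uIcc (h v) (h w) ∧ p.1 = D.curve s(v, w) p.2}

/-- `p` is a crossing point of the two distinct edges `{v, w}` and `{v', w'}`:
it lies on both curves and is not the image of a shared endpoint. -/
def IsCrossing (D : ReebDrawing G h) (p : ℝ × ℝ) (v w v' w' : V) : Prop :=
  G.Adj v w ∧ G.Adj v' w' ∧ s(v, w) ≠ s(v', w') ∧
    p ∈ D.edgeCurve v w ∧ p ∈ D.edgeCurve v' w' ∧
    ∀ u : V, (u = v ∨ u = w) → (u = v' ∨ u = w') → p ≠ D.pos u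

/-- The set of crossings of a drawing: an unordered pair of (distinct) edges together
with a crossing point of these two edges. -/
def crossingSet (D : ReebDrawing G h) : Set (Sym2 (Sym2 V) × (ℝ × ℝ)) :=
  {q | ∃ v w v' w', q.1 = s(s(v, w), s(v', w')) ∧ D.IsCrossing q.2 v w v' w'}

/-- The number of crossings of a drawing, counted over all pairs of edges. -/
noncomputable def numCrossings (D : ReebDrawing G h) : ℕ∞ := D.crossingSet.encard

/-- The crossings involving the fixed edge `e₀`: the other edge together with the
crossing point. -/
def edgeCrossings (D : ReebDrawing G h) (e₀ : Sym2 V) : Set (Sym2 V × (ℝ × ℝ)) :=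
  {q | ∃ v w v' w', s(v, w) = e₀ ∧ q.1 = s(v', w') ∧ D.IsCrossing q.2 v w v' w'}

/-- The edge `{v, w}` is drawn as a straight line segment. -/
def Straight (D : ReebDrawing G h) (v w : V) : Prop :=
  ∀ y ∈ Set.uIcc (h v) (h w),
    D.curve s(v, w) y = D.x v + (y - h v) * (D.x w - D.x v) / (h w - h v)

/-- The edge `{v, w}` is drawn as an `xy`-monotone curve: besides meeting every
horizontal line at most once (which holds by construction), it meets every vertical
line at most once. -/
def XYMonotone (D : ReebDrawing G h) (v w : V) : Prop :=
  Set.InjOn (D.curve s(v, w)) (Set.uIcc (h v) (h w))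

/-- Edge `{v, w}` is (strictly) left of edge `{v', w'}`: at every height in the
interior of the common `y`-interval, the point of the first curve has strictly
smaller `x`-coordinate. -/
def LeftOf (D : ReebDrawing G h) (v w v' w' : V) : Prop :=
  ∀ y ∈ interior (Set.uIcc (h v) (h w) ∩ Set.uIcc (h v') (h w')),
    D.curve s(v, w) y < D.curve s(v', w') y

end ReebDrawing

/-- The Reeb graph crossing number: the minimum number of crossings over all
drawings of `(G, h)`. -/
noncomputable def RGCN {V : Type*} (G : SimpleGraph V) (h : V → ℝ) : ℕ∞ :=
  ⨅ D : ReebDrawing G h, D.numCrossings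

/-- The number of neighbours of `v` of strictly smaller height. -/
noncomputable def downDeg {V : Type*} (G : SimpleGraph V) (h : V → ℝ) (v : V) : ℕ :=
  {w | G.Adj v w ∧ h w < h v}.ncard

/-- The number of neighbours of `v` of strictly larger height. -/
noncomputable def upDeg {V : Type*} (G : SimpleGraph V) (h : V → ℝ) (v : V) : ℕ :=
  {w | G.Adj v w ∧ h v < h w}.ncard

/-- A generic Reeb graph: all vertex heights are distinct, every vertex has degree
`1` or `3`, and every vertex has at most `2` lower and at most `2` higher neighbours. -/
def IsGenericReeb {V : Type*} (G : SimpleGraph V) (h : V → ℝ) : Prop :=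
  Function.Injective h ∧
  (∀ v : V, (G.neighborSet v).ncard = 1 ∨ (G.neighborSet v).ncard = 3) ∧
  (∀ v : V, downDeg G h v ≤ 2 ∧ upDeg G h v ≤ 2)

/-- A subdivided Reeb graph: every edge joins vertices at consecutive levels (distinct
heights with no vertex height strictly in between), every vertex has degree at most `3`,
with at most `2` lower and at most `2` higher neighbours. -/
def IsSubdividedReeb {V : Type*} (G : SimpleGraph V) (h : V → ℝ) : Prop :=
  (∀ v w : V, G.Adj v w → h v ≠ h w ∧
    ∀ u : V, h u ∉ Set.Ioo (min (h v) (h w)) (max (h v) (h w))) ∧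
  (∀ v : V, (G.neighborSet v).ncard ≤ 3 ∧ downDeg G h v ≤ 2 ∧ upDeg G h v ≤ 2)

/-- `G` is the cycle graph on the enumeration `e` of its vertex set: adjacency holds
exactly between cyclically consecutive vertices. -/
def IsCycleEnum {V : Type*} {n : ℕ} (G : SimpleGraph V) (e : Fin n ≃ V) : Prop :=
  ∀ i j : Fin n, G.Adj (e i) (e j) ↔ ((i.val + 1) % n = j.val ∨ (j.val + 1) % n = i.val)

/-- A caterpillar: a tree together with a central path (the spine) such that every
vertex is on the spine or adjacent to a spine vertex. -/
def IsCaterpillar {V : Type*} (G : SimpleGraph V) : Prop :=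
  G.IsTree ∧ ∃ (n : ℕ) (s : Fin n → V),
    Function.Injective s ∧
    (∀ (i : ℕ) (hi : i + 1 < n), G.Adj (s ⟨i, Nat.lt_of_succ_lt hi⟩) (s ⟨i + 1, hi⟩)) ∧
    (∀ v : V, v ∈ Set.range s ∨ ∃ i : Fin n, G.Adj v (s i))

/-- Symmetric in `v` and `w` even when `h v = h w`, so that it descends to `Sym2 V`. -/
noncomputable def straightLine {V : Type*} (h : V → ℝ) (x : V → ℝ) (v w : V) : ℝ → ℝ :=
  fun y => ((h w - y) * x v + (y - h v) * x w) / (h w - h v)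

lemma straightLine_symm {V : Type*} (h : V → ℝ) (x : V → ℝ) (v w : V) :
    straightLine h x v w = straightLine h x w v := by
  funext y
  rw [straightLine, straightLine, ← neg_div_neg_eq]
  congr 1 <;> ring

lemma continuous_straightLine {V : Type*} (h : V → ℝ) (x : V → ℝ) (v w : V) :
    Continuous (straightLine h x v w) := by
  unfold straightLine
  fun_prop

lemma straightLine_eq {V : Type*} {h : V → ℝ} (x : V → ℝ) {v w : V} (hvw : h v ≠ h w)
    (y : ℝ) : straightLine h x v w y = x v + (y - h v) * (x w - x v) / (h w - h v) := by
  have : h w - h v ≠ 0 := sub_ne_zero.2 hvw.symm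
  rw [straightLine]
  field_simp
  ring

lemma straightLine_left {V : Type*} {h : V → ℝ} (x : V → ℝ) {v w : V} (hvw : h v ≠ h w) :
    straightLine h x v w (h v) = x v := by
  simp [straightLine_eq x hvw]

lemma straightLine_sub_straightLine_mul {V : Type*} (h : V → ℝ) (x : V → ℝ)
    {v w v' w' : V} (hvw : h v ≠ h w) (hv : h v = h v') (hw : h w = h w') (y : ℝ) :
    (straightLine h x v' w' y - straightLine h x v w y) * (h w - h v) =
      (h w - y) * (x v' - x v) + (y - h v) * (x w' - x w) := by
  have : h w - h v ≠ 0 := sub_ne_zero.2 hvw.symm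
  rw [straightLine, straightLine, ← hv, ← hw]
  field_simp
  ring

lemma mul_neg_or_eq_zero_of_mul_add_mul_eq_zero {K : Type*} [Field K] [LinearOrder K]
    [IsStrictOrderedRing K] {s t d e : K} (hs : 0 < s) (ht : 0 < t)
    (hsum : s * d + t * e = 0) : d * e < 0 ∨ d = 0 ∧ e = 0 := by
  rcases lt_trichotomy d 0 with hd | hd | hd
  · left
    have : 0 < e := by nlinarith
    exact mul_neg_of_neg_of_pos hd this
  · right
    subst hd
    exact ⟨rfl, by simpa [ht.ne'] using hsum⟩
  · left
    have : e < 0 := by nlinarith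
    exact mul_neg_of_pos_of_neg hd this

lemma eq_and_eq_of_mem_Ioo_of_mem_Icc {α : Type*} [LinearOrder α] {a b a' b' y : α}
    (ha' : a' ∉ Ioo a b) (hb' : b' ∉ Ioo a b) (ha : a ∉ Ioo a' b') (hb : b ∉ Ioo a' b')
    (hy : y ∈ Ioo a b) (hy' : y ∈ Icc a' b') : a = a' ∧ b = b' := by
  have h₁ : a' ≤ a := not_lt.1 fun H => ha' ⟨H, hy'.1.trans_lt hy.2⟩
  have h₂ : b ≤ b' := not_lt.1 fun H => hb' ⟨hy.1.trans_le hy'.2, H⟩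
  have h₃ : a ≤ a' := not_lt.1 fun H => ha ⟨H, hy.1.trans (hy.2.trans_le h₂)⟩
  have h₄ : b' ≤ b := not_lt.1 fun H => hb ⟨h₁.trans_lt (hy.1.trans hy.2), H⟩
  exact ⟨le_antisymm h₃ h₁, le_antisymm h₂ h₄⟩

lemma endpoints_or_eq_of_mem_Icc_inter {α : Type*} [LinearOrder α] {a b a' b' y : α}
    (ha' : a' ∉ Ioo a b) (hb' : b' ∉ Ioo a b) (ha : a ∉ Ioo a' b') (hb : b ∉ Ioo a' b')
    (hy : y ∈ Icc a b) (hy' : y ∈ Icc a' b') :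
    (y = a ∨ y = b) ∧ (y = a' ∨ y = b') ∨ a = a' ∧ b = b' ∧ y ∈ Ioo a b := by
  have mem_Ioo_of_ne {c d : α} (hc : y ∈ Icc c d) (hne : ¬(y = c ∨ y = d)) : y ∈ Ioo c d :=
    ⟨hc.1.lt_of_ne fun e => hne (Or.inl e.symm), hc.2.lt_of_ne fun e => hne (Or.inr e)⟩
  by_cases hE : y = a ∨ y = b
  · by_cases hE' : y = a' ∨ y = b'
    · exact Or.inl ⟨hE, hE'⟩
    · have hIoo' := mem_Ioo_of_ne hy' hE'
      obtain ⟨rfl, rfl⟩ := eq_and_eq_of_mem_Ioo_of_mem_Icc ha hb ha' hb' hIoo' hy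
      exact Or.inr ⟨rfl, rfl, hIoo'⟩
  · have hIoo := mem_Ioo_of_ne hy hE
    obtain ⟨hA, hB⟩ := eq_and_eq_of_mem_Ioo_of_mem_Icc ha' hb' ha hb hIoo hy'
    exact Or.inr ⟨hA, hB, hIoo⟩

namespace ReebDrawing

variable {V : Type*} {G : SimpleGraph V} {h : V → ℝ}

lemma curve_end_right (D : ReebDrawing G h) {v w : V} (hvw : G.Adj v w) :
    D.curve s(v, w) (h w) = D.x w := by
  rw [Sym2.eq_swap]
  exact D.curve_end w v hvw.symm

lemma edgeCurve_comm (D : ReebDrawing G h) (v w : V) :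
    D.edgeCurve v w = D.edgeCurve w v := by
  rw [edgeCurve, edgeCurve, Sym2.eq_swap, uIcc_comm]

lemma eq_pos_of_mem_edgeCurve (D : ReebDrawing G h) {v w : V} (hvw : G.Adj v w)
    {p : ℝ × ℝ} (hp : p ∈ D.edgeCurve v w) (hpv : p.2 = h v) : p = D.pos v := by
  obtain ⟨-, hp₁⟩ := hp
  rw [hpv, D.curve_end v w hvw] at hp₁
  exact Prod.ext hp₁ hpv

lemma IsCrossing.symm_edges {D : ReebDrawing G h} {p : ℝ × ℝ} {v w v' w' : V}
    (hc : D.IsCrossing p v w v' w') : D.IsCrossing p v' w' v w := by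
  obtain ⟨a1, a2, a3, a4, a5, a6⟩ := hc
  exact ⟨a2, a1, a3.symm, a5, a4, fun u h1 h2 => a6 u h2 h1⟩

lemma IsCrossing.swap_left {D : ReebDrawing G h} {p : ℝ × ℝ} {v w v' w' : V}
    (hc : D.IsCrossing p v w v' w') : D.IsCrossing p w v v' w' := by
  obtain ⟨a1, a2, a3, a4, a5, a6⟩ := hc
  refine ⟨a1.symm, a2, ?_, ?_, a5, fun u h1 h2 => a6 u h1.symm h2⟩
  · rwa [Sym2.eq_swap]
  · rwa [← D.edgeCurve_comm v w]

lemma IsCrossing.swap_right {D : ReebDrawing G h} {p : ℝ × ℝ} {v w v' w' : V}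
    (hc : D.IsCrossing p v w v' w') : D.IsCrossing p v w w' v' :=
  hc.symm_edges.swap_left.symm_edges

lemma IsCrossing.exists_lt_lt {D : ReebDrawing G h} {p : ℝ × ℝ} {v w v' w' : V}
    (hne : ∀ v w, G.Adj v w → h v ≠ h w) (hc : D.IsCrossing p v w v' w') :
    ∃ a b a' b', D.IsCrossing p a b a' b' ∧ h a < h b ∧ h a' < h b' := by
  rcases (hne v w hc.1).lt_or_gt with h₁ | h₁ <;>
    rcases (hne v' w' hc.2.1).lt_or_gt with h₂ | h₂
  · exact ⟨_, _, _, _, hc, h₁, h₂⟩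
  · exact ⟨_, _, _, _, hc.swap_right, h₁, h₂⟩
  · exact ⟨_, _, _, _, hc.swap_left, h₁, h₂⟩
  · exact ⟨_, _, _, _, hc.swap_left.swap_right, h₁, h₂⟩

/-- Such a meeting point would be the image of a common endpoint. -/
lemma IsCrossing.not_endpoint_heights {D : ReebDrawing G h} {p : ℝ × ℝ} {v w v' w' : V}
    (hc : D.IsCrossing p v w v' w') :
    ¬((p.2 = h v ∨ p.2 = h w) ∧ (p.2 = h v' ∨ p.2 = h w')) := by
  obtain ⟨hadj, hadj', -, hp, hp', hshared⟩ := hc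
  have pos_of_height {a b : V} (hab : G.Adj a b) (hpab : p ∈ D.edgeCurve a b) :
      p.2 = h a ∨ p.2 = h b → ∃ u, (u = a ∨ u = b) ∧ p = D.pos u
    | .inl e => ⟨a, Or.inl rfl, D.eq_pos_of_mem_edgeCurve hab hpab e⟩
    | .inr e => ⟨b, Or.inr rfl,
        D.eq_pos_of_mem_edgeCurve hab.symm (D.edgeCurve_comm a b ▸ hpab) e⟩
  rintro ⟨hE, hE'⟩
  obtain ⟨u, hu, rfl⟩ := pos_of_height hadj hp hE
  obtain ⟨u', hu', hpos⟩ := pos_of_height hadj' hp' hE'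
  obtain rfl : u = u' := D.inj hpos
  exact hshared u hu hu' rfl

lemma exists_isCrossing_of_mul_neg (D : ReebDrawing G h) {v w v' w' : V}
    (hadj : G.Adj v w) (hadj' : G.Adj v' w') (hne : s(v, w) ≠ s(v', w'))
    (hv : h v = h v') (hw : h w = h w') (hx : (D.x v' - D.x v) * (D.x w' - D.x w) < 0) :
    ∃ p, D.IsCrossing p v w v' w' := by
  set g : ℝ → ℝ := fun y => D.curve s(v', w') y - D.curve s(v, w) y
  have hg : Continuous g :=
    (D.curve_cont _ (G.mem_edgeSet.2 hadj')).sub (D.curve_cont _ (G.mem_edgeSet.2 hadj))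
  have hgv : g (h v) = D.x v' - D.x v := by
    show D.curve s(v', w') (h v) - D.curve s(v, w) (h v) = _
    rw [D.curve_end v w hadj, hv, D.curve_end v' w' hadj']
  have hgw : g (h w) = D.x w' - D.x w := by
    show D.curve s(v', w') (h w) - D.curve s(v, w) (h w) = _
    rw [D.curve_end_right hadj, hw, D.curve_end_right hadj']
  have h0 : (0 : ℝ) ∈ uIcc (g (h v)) (g (h w)) := by
    rw [hgv, hgw, mem_uIcc]
    rcases mul_neg_iff.1 hx with ⟨h₁, h₂⟩ | ⟨h₁, h₂⟩
    · exact Or.inr ⟨h₂.le, h₁.le⟩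
    · exact Or.inl ⟨h₁.le, h₂.le⟩
  obtain ⟨y, hy, hgy⟩ := intermediate_value_uIcc hg.continuousOn h0
  have hyv : y ≠ h v := by
    rintro rfl
    exact left_ne_zero_of_mul hx.ne (hgv ▸ hgy)
  have hyw : y ≠ h w := by
    rintro rfl
    exact right_ne_zero_of_mul hx.ne (hgw ▸ hgy)
  refine ⟨(D.curve s(v, w) y, y), hadj, hadj', hne, ⟨hy, rfl⟩, ⟨hv ▸ hw ▸ hy, ?_⟩, ?_⟩
  · exact (sub_eq_zero.1 hgy).symm
  · rintro u (rfl | rfl) - hpos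
    · exact hyv (congrArg Prod.snd hpos)
    · exact hyw (congrArg Prod.snd hpos)

noncomputable def straighten (D : ReebDrawing G h) (hne : ∀ v w, G.Adj v w → h v ≠ h w) :
    ReebDrawing G h where
  x := D.x
  inj := D.inj
  curve := Sym2.lift ⟨straightLine h D.x, straightLine_symm h D.x⟩
  curve_cont e _ := by
    induction e using Sym2.ind with
    | _ v w => exact continuous_straightLine h D.x v w
  curve_end v w hvw := straightLine_left D.x (hne v w hvw)

variable (D : ReebDrawing G h) (hne : ∀ v w, G.Adj v w → h v ≠ h w)

lemma straighten_curve_mk (v w : V) :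
    (D.straighten hne).curve s(v, w) = straightLine h D.x v w := rfl

lemma straighten_straight {v w : V} (hvw : G.Adj v w) : (D.straighten hne).Straight v w :=
  fun y _ => straightLine_eq D.x (hne v w hvw) y

end ReebDrawing

namespace IsSubdividedReeb

variable {V : Type*} {G : SimpleGraph V} {h : V → ℝ}

lemma height_ne (hsub : IsSubdividedReeb G h) : ∀ v w, G.Adj v w → h v ≠ h w :=
  fun v w hvw => (hsub.1 v w hvw).1

lemma notMem_Ioo (hsub : IsSubdividedReeb G h) {v w : V} (hvw : G.Adj v w) (hlt : h v < h w)
    (u : V) : h u ∉ Ioo (h v) (h w) := by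
  simpa [min_eq_left hlt.le, max_eq_right hlt.le] using (hsub.1 v w hvw).2 u

/-- Since edges join consecutive levels, two straightened edges can only meet at a common
endpoint or inside a common height slab; in the latter case the original curves cross. -/
theorem crossingSet_straighten_eq_empty (hsub : IsSubdividedReeb G h) (D : ReebDrawing G h)
    (hplanar : D.crossingSet = ∅) :
    (D.straighten hsub.height_ne).crossingSet = ∅ := by
  refine eq_empty_iff_forall_notMem.2 ?_
  rintro ⟨_, p⟩ ⟨_, _, _, _, -, hc⟩
  obtain ⟨v, w, v', w', hc, hlt, hlt'⟩ :=
    ReebDrawing.IsCrossing.exists_lt_lt hsub.height_ne hc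
  obtain ⟨hadj, hadj', hne, ⟨hy, hp⟩, ⟨hy', hp'⟩, -⟩ := id hc
  rw [uIcc_of_lt hlt] at hy
  rw [uIcc_of_lt hlt'] at hy'
  rcases endpoints_or_eq_of_mem_Icc_inter (hsub.notMem_Ioo hadj hlt v')
      (hsub.notMem_Ioo hadj hlt w') (hsub.notMem_Ioo hadj' hlt' v)
      (hsub.notMem_Ioo hadj' hlt' w) hy hy' with hE | ⟨hv, hw, hyI⟩
  · exact hc.not_endpoint_heights hE
  have hsum := straightLine_sub_straightLine_mul h D.x hlt.ne hv hw p.2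
  rw [← D.straighten_curve_mk hsub.height_ne, ← D.straighten_curve_mk hsub.height_ne, ← hp,
    ← hp', sub_self, zero_mul] at hsum
  rcases mul_neg_or_eq_zero_of_mul_add_mul_eq_zero (sub_pos.2 hyI.2) (sub_pos.2 hyI.1)
      hsum.symm with hx | ⟨hx, hx'⟩
  · obtain ⟨q, hq⟩ := D.exists_isCrossing_of_mul_neg hadj hadj' hne hv hw hx
    exact eq_empty_iff_forall_notMem.1 hplanar (s(s(v, w), s(v', w')), q)
      ⟨v, w, v', w', rfl, hq⟩
  · have hvv : v = v' := D.inj (Prod.ext (sub_eq_zero.1 hx).symm hv)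
    have hww : w = w' := D.inj (Prod.ext (sub_eq_zero.1 hx').symm hw)
    exact hne (by rw [hvv, hww])

end IsSubdividedReeb

theorem planar_reeb_drawing_straightening_general
    {V : Type*} (G : SimpleGraph V) (h : V → ℝ)
    (hsub : IsSubdividedReeb G h)
    (D : ReebDrawing G h)
    (hplanar : D.crossingSet = ∅) :
    ∃ D' : ReebDrawing G h,
      D'.crossingSet = ∅ ∧
      (∀ v w : V, D.x v < D.x w → D'.x v < D'.x w) ∧
      (∀ v w : V, G.Adj v w → D'.Straight v w) :=
  ⟨D.straighten hsub.height_ne, hsub.crossingSet_straighten_eq_empty D hplanar,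
    fun _ _ hlt => hlt, fun _ _ => D.straighten_straight hsub.height_ne⟩

/-- If a subdivided generic Reeb graph `(G, h)` admits a drawing with
zero crossings in which every edge is an `xy`-monotone curve (every vertex lies at
`y`-coordinate `h v` by definition of a drawing), then it admits a zero-crossing
drawing in which the vertices appear in the same left-to-right order of
`x`-coordinates, and every edge is drawn as a straight line segment. -/
theorem planar_reeb_drawing_straightening
    {V : Type*} [Fintype V] (G : SimpleGraph V) (h : V → ℝ)
    (hsub : IsSubdividedReeb G h)
    (D : ReebDrawing G h)
    (hplanar : D.crossingSet = ∅)
    (hxy : ∀ v w : V, G.Adj v w → D.XYMonotone v w) :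
    ∃ D' : ReebDrawing G h,
      D'.crossingSet = ∅ ∧
      (∀ v w : V, D.x v < D.x w → D'.x v < D'.x w) ∧
      (∀ v w : V, G.Adj v w → D'.Straight v w) :=
  planar_reeb_drawing_straightening_general G h hsub D hplanar
end

section
/- Let (G, h) be a Reeb graph such that G is a caterpillar in which every vertex has degree at most 3. Then (G, h) admits a drawing with zero crossings. -/
/-!
Place the spine vertex `s i` at `x = i` and every other vertex slightly to the right of its spine
neighbour `s i`, at some `x ∈ (i, i + 1)`, and draw all edges straight. In a tree, every edge is
then either a spine edge `s i s (i+1)` or joins a leaf to its unique spine neighbour, so each edge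
runs rightwards from its spine endpoint inside the unit strip of that endpoint. Edges from
different spine vertices can therefore meet only on a common boundary column, i.e. at a shared
spine vertex. Edges from the same spine vertex are segments from a common point, which meet only
there as soon as their slopes `dx/dy` differ; the leaf offsets are chosen so that the leaf edges
have pairwise distinct `|dx/dy| ≤ 1 / K`, while a spine edge has `|dx/dy| = 1 / |Δh| > 1 / K` for
a bound `K` on all height differences.
-/

open Set

namespace ReebDrawing

variable {V : Type*} {G : SimpleGraph V} {h : V → ℝ}

lemma edgeCurve_congr (D : ReebDrawing G h) {u a v w : V} (he : s(u, a) = s(v, w)) :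
    D.edgeCurve u a = D.edgeCurve v w := by
  rcases Sym2.eq_iff.1 he with ⟨rfl, rfl⟩ | ⟨rfl, rfl⟩
  · rfl
  · exact D.edgeCurve_comm _ _

lemma crossingSet_eq_empty_of_meet_at_common_vertex (D : ReebDrawing G h)
    (H : ∀ v w v' w' p, G.Adj v w → G.Adj v' w' → s(v, w) ≠ s(v', w') →
      p ∈ D.edgeCurve v w → p ∈ D.edgeCurve v' w' →
        ∃ c ∈ s(v, w), c ∈ s(v', w') ∧ p = D.pos c) :
    D.crossingSet = ∅ := by
  refine eq_empty_of_forall_notMem ?_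
  rintro q ⟨v, w, v', w', -, hvw, hvw', hne, hp, hp', hpos⟩
  obtain ⟨c, hc, hc', hq⟩ := H v w v' w' q.2 hvw hvw' hne hp hp'
  exact hpos c (Sym2.mem_iff.1 hc) (Sym2.mem_iff.1 hc') hq

/-- The inverse slope `dx/dy` of the segment from `v` to `w`. -/
noncomputable def lineSlope (x h : V → ℝ) (v w : V) : ℝ := (x w - x v) / (h w - h v)

noncomputable def straightLine (x : V → ℝ)
    (hx : Function.Injective fun v => ((x v, h v) : ℝ × ℝ))
    (hG : ∀ v w, G.Adj v w → h v ≠ h w) : ReebDrawing G h where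
  x := x
  inj := hx
  -- symmetric in `v, w` even when `h v = h w` (where `/ 0 = 0`), so that it descends to `Sym2 V`
  curve := Sym2.lift ⟨fun v w y => (x v * (h w - y) + x w * (y - h v)) / (h w - h v),
    fun v w => funext fun y => by
      simp only; rw [← neg_div_neg_eq]; congr 1 <;> ring⟩
  curve_cont e _ := by
    induction e using Sym2.ind
    simp only [Sym2.lift_mk]
    fun_prop
  curve_end v w hvw := by
    have : h w - h v ≠ 0 := sub_ne_zero.2 (hG v w hvw).symm
    simp only [Sym2.lift_mk]
    field_simp
    ring

variable {x : V → ℝ} {hx : Function.Injective fun v => ((x v, h v) : ℝ × ℝ)}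
  {hG : ∀ v w, G.Adj v w → h v ≠ h w}

lemma mem_edgeCurve_straightLine {v w : V} (hvw : G.Adj v w) {p : ℝ × ℝ} :
    p ∈ (straightLine x hx hG).edgeCurve v w ↔
      p.2 ∈ uIcc (h v) (h w) ∧ p.1 = x v + (p.2 - h v) * lineSlope x h v w := by
  have : h w - h v ≠ 0 := sub_ne_zero.2 (hG v w hvw).symm
  simp only [edgeCurve, straightLine, lineSlope, Sym2.lift_mk]
  refine and_congr_right fun _ => Eq.congr_right ?_
  field_simp
  ring

lemma fst_mem_uIcc_of_mem_edgeCurve {v w : V} (hvw : G.Adj v w) {p : ℝ × ℝ}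
    (hp : p ∈ (straightLine x hx hG).edgeCurve v w) : p.1 ∈ uIcc (x v) (x w) := by
  rw [mem_edgeCurve_straightLine hvw] at hp
  set f : ℝ → ℝ := fun y => x v + (y - h v) * lineSlope x h v w
  have hfw : f (h w) = x w := by
    have : h w - h v ≠ 0 := sub_ne_zero.2 (hG v w hvw).symm
    simp only [f, lineSlope]
    field_simp
    ring
  have hsub : f '' uIcc (h v) (h w) ⊆ uIcc (f (h v)) (f (h w)) := by
    rcases le_total 0 (lineSlope x h v w) with hm | hm
    · exact Monotone.image_uIcc_subset fun a b hab => by simp only [f]; gcongr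
    · exact Antitone.image_uIcc_subset fun a b hab => by
        simp only [f]; nlinarith
  simpa [f, hfw, hp.2] using hsub (mem_image_of_mem f hp.1)

lemma eq_pos_of_mem_edgeCurve_of_fst_eq {v w : V} (hvw : G.Adj v w) (hxvw : x v ≠ x w)
    {p : ℝ × ℝ} (hp : p ∈ (straightLine x hx hG).edgeCurve v w) (hpx : p.1 = x w) :
    p = (straightLine x hx hG).pos w := by
  rw [mem_edgeCurve_straightLine hvw] at hp
  have hΔ : h w - h v ≠ 0 := sub_ne_zero.2 (hG v w hvw).symm
  have hm : lineSlope x h v w ≠ 0 := div_ne_zero (sub_ne_zero.2 hxvw.symm) hΔ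
  have hmw : (h w - h v) * lineSlope x h v w = x w - x v := by
    simp only [lineSlope]; field_simp
  have hy : p.2 = h w := by
    have := mul_right_cancel₀ hm (show (p.2 - h v) * _ = (h w - h v) * _ by linarith)
    linarith
  exact Prod.ext hpx hy

lemma eq_pos_of_mem_edgeCurve_of_lineSlope_ne {u a b : V} (hua : G.Adj u a) (hub : G.Adj u b)
    (hslope : lineSlope x h u a ≠ lineSlope x h u b) {p : ℝ × ℝ}
    (hpa : p ∈ (straightLine x hx hG).edgeCurve u a)
    (hpb : p ∈ (straightLine x hx hG).edgeCurve u b) : p = (straightLine x hx hG).pos u := by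
  rw [mem_edgeCurve_straightLine hua] at hpa
  rw [mem_edgeCurve_straightLine hub] at hpb
  have hy : p.2 = h u := by
    have : (p.2 - h u) * (lineSlope x h u a - lineSlope x h u b) = 0 := by
      linear_combination hpb.2 - hpa.2
    linarith [(mul_eq_zero.1 this).resolve_right (sub_ne_zero.2 hslope)]
  exact Prod.ext (by rw [hpa.2, hy, sub_self, zero_mul, add_zero]; rfl) hy

def IsStripEdge (S : Set V) (x : V → ℝ) (u a : V) : Prop :=
  u ∈ S ∧ x u < x a ∧ x a ≤ x u + 1 ∧ (x a = x u + 1 → a ∈ S)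

lemma exists_common_vertex_of_isStripEdge {S : Set V} (hS_int : ∀ u ∈ S, ∃ m : ℤ, x u = m)
    (hS_inj : InjOn x S)
    (hslope : ∀ u ∈ S, InjOn (lineSlope x h u) {a | G.Adj u a ∧ x u < x a})
    {u a u' a' : V} (hua : G.Adj u a) (hua' : G.Adj u' a')
    (hstrip : IsStripEdge S x u a) (hstrip' : IsStripEdge S x u' a') (hle : x u ≤ x u')
    (hne : s(u, a) ≠ s(u', a')) {p : ℝ × ℝ} (hp : p ∈ (straightLine x hx hG).edgeCurve u a)
    (hp' : p ∈ (straightLine x hx hG).edgeCurve u' a') :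
    ∃ c ∈ s(u, a), c ∈ s(u', a') ∧ p = (straightLine x hx hG).pos c := by
  obtain ⟨hu, hlt, hle1, hS⟩ := hstrip
  obtain ⟨hu', hlt', -, -⟩ := hstrip'
  obtain ⟨hp1, hp2⟩ := (uIcc_of_le hlt.le) ▸ fst_mem_uIcc_of_mem_edgeCurve hua hp
  obtain ⟨hp1', hp2'⟩ := (uIcc_of_le hlt'.le) ▸ fst_mem_uIcc_of_mem_edgeCurve hua' hp'
  rcases hle.eq_or_lt with heq | hlt_uu'
  · obtain rfl := hS_inj hu hu' heq
    have haa' : a ≠ a' := fun h => hne (h ▸ rfl)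
    have hslope_ne := (hslope u hu).ne ⟨hua, hlt⟩ ⟨hua', heq ▸ hlt'⟩ haa'
    exact ⟨u, Sym2.mem_mk_left u a, Sym2.mem_mk_left u a',
      eq_pos_of_mem_edgeCurve_of_lineSlope_ne hua hua' hslope_ne hp hp'⟩
  · -- different columns: the strips of the two edges meet only in the column of `u'`
    obtain ⟨m, hm⟩ := hS_int u hu
    obtain ⟨m', hm'⟩ := hS_int u' hu'
    have hcol : x u + 1 ≤ x u' := by
      rw [hm, hm'] at hlt_uu' ⊢
      exact_mod_cast Int.add_one_le_iff.2 (by exact_mod_cast hlt_uu')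
    have hxa : x a = x u + 1 := by linarith
    obtain rfl : a = u' := hS_inj (hS hxa) hu' (by linarith)
    exact ⟨a, Sym2.mem_mk_right u a, Sym2.mem_mk_left a a',
      eq_pos_of_mem_edgeCurve_of_fst_eq hua hlt.ne hp (by linarith)⟩

theorem crossingSet_straightLine_eq_empty (S : Set V) (hS_int : ∀ u ∈ S, ∃ m : ℤ, x u = m)
    (hS_inj : InjOn x S)
    (hslope : ∀ u ∈ S, InjOn (lineSlope x h u) {a | G.Adj u a ∧ x u < x a})
    (horient : ∀ v w, G.Adj v w → ∃ u a, s(u, a) = s(v, w) ∧ IsStripEdge S x u a) :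
    (straightLine x hx hG).crossingSet = ∅ := by
  refine crossingSet_eq_empty_of_meet_at_common_vertex _ fun v w v' w' p hvw hvw' hne hp hp' => ?_
  obtain ⟨u, a, he, hstrip⟩ := horient v w hvw
  obtain ⟨u', a', he', hstrip'⟩ := horient v' w' hvw'
  rw [← he, ← he'] at hne ⊢
  rw [← edgeCurve_congr _ he] at hp
  rw [← edgeCurve_congr _ he'] at hp'
  have hua : G.Adj u a := G.mem_edgeSet.1 (he ▸ hvw)
  have hua' : G.Adj u' a' := G.mem_edgeSet.1 (he' ▸ hvw')
  rcases le_total (x u) (x u') with hle | hle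
  · exact exists_common_vertex_of_isStripEdge hS_int hS_inj hslope hua hua' hstrip hstrip' hle
      hne hp hp'
  · obtain ⟨c, hc', hc, hpc⟩ := exists_common_vertex_of_isStripEdge hS_int hS_inj hslope hua'
      hua hstrip' hstrip hle hne.symm hp' hp
    exact ⟨c, hc, hc', hpc⟩

end ReebDrawing

namespace SimpleGraph

variable {V : Type*} {G : SimpleGraph V}

lemma IsAcyclic.length_eq_one_of_adj (hG : G.IsAcyclic) {u v : V} (huv : G.Adj u v)
    {p : G.Walk u v} (hp : p.IsPath) : p.length = 1 :=
  congrArg (fun q : G.Path u v => q.1.length)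
    ((hG.subsingleton_path u v).elim ⟨p, hp⟩ (Path.singleton huv))

structure CaterpillarSpine (G : SimpleGraph V) (n : ℕ) where
  s : Fin n → V
  injective : Function.Injective s
  adj : ∀ i j : Fin n, (i : ℕ) + 1 = j → G.Adj (s i) (s j)
  foot : V → Fin n
  foot_spec : ∀ v, v = s (foot v) ∨ v ∉ range s ∧ G.Adj v (s (foot v))

lemma _root_.IsCaterpillar.exists_caterpillarSpine (hcat : IsCaterpillar G) :
    ∃ n, Nonempty (G.CaterpillarSpine n) := by
  obtain ⟨-, n, s, hs, hadj, hcover⟩ := hcat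
  have hfoot : ∀ v, ∃ i, v = s i ∨ v ∉ range s ∧ G.Adj v (s i) := fun v => by
    by_cases hv : v ∈ range s
    · obtain ⟨i, rfl⟩ := hv
      exact ⟨i, Or.inl rfl⟩
    · obtain ⟨i, hi⟩ := (hcover v).resolve_left hv
      exact ⟨i, Or.inr ⟨hv, hi⟩⟩
  choose foot hfoot using hfoot
  refine ⟨n, ⟨s, hs, fun i j hij => ?_, foot, hfoot⟩⟩
  obtain ⟨i, hi⟩ := i
  obtain ⟨j, hj⟩ := j
  subst hij
  exact hadj i hj

namespace CaterpillarSpine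

variable {n : ℕ} (S : G.CaterpillarSpine n)

lemma foot_s (i : Fin n) : S.foot (S.s i) = i :=
  ((S.foot_spec (S.s i)).elim (fun h => S.injective h.symm)
    fun h => absurd (mem_range_self i) h.1)

lemma adj_foot {v : V} (hv : v ∉ range S.s) : G.Adj v (S.s (S.foot v)) :=
  ((S.foot_spec v).resolve_left fun h => hv (h ▸ mem_range_self _)).2

lemma s_foot {v : V} (hv : v ∈ range S.s) : S.s (S.foot v) = v := by
  obtain ⟨i, rfl⟩ := hv
  rw [foot_s]

lemma exists_isPath (i j : Fin n) (hij : i ≤ j) :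
    ∃ p : G.Walk (S.s i) (S.s j),
      p.IsPath ∧ p.length = j - i ∧ ∀ v ∈ p.support, v ∈ range S.s := by
  suffices H : ∀ d (j : Fin n), (j : ℕ) = i + d → ∃ p : G.Walk (S.s i) (S.s j),
      p.IsPath ∧ p.length = d ∧ ∀ v ∈ p.support, ∃ k ≤ j, v = S.s k by
    obtain ⟨p, hp, hlen, hsupp⟩ := H (j - i) j (by omega)
    refine ⟨p, hp, hlen, fun v hv => ?_⟩
    obtain ⟨k, -, rfl⟩ := hsupp v hv
    exact mem_range_self k
  intro d
  induction d with
  | zero =>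
    intro j hj
    obtain rfl : i = j := (Fin.ext hj).symm
    exact ⟨.nil, .nil, rfl, fun v hv => ⟨i, le_rfl, by simpa using hv⟩⟩
  | succ d ih =>
    intro j hj
    obtain ⟨p, hp, hlen, hsupp⟩ := ih ⟨(i : ℕ) + d, by omega⟩ rfl
    have hj_notMem : S.s j ∉ p.support := fun hmem => by
      obtain ⟨k, hk, hkj⟩ := hsupp _ hmem
      have := S.injective hkj
      subst this
      exact absurd hk (by simp only [Fin.le_def]; omega)
    refine ⟨p.concat (S.adj _ j (by simp only; omega)), hp.concat hj_notMem _, by simp [hlen],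
      fun v hv => ?_⟩
    rw [Walk.support_concat, List.mem_append, List.mem_singleton] at hv
    rcases hv with hv | rfl
    · obtain ⟨k, hk, rfl⟩ := hsupp v hv
      exact ⟨k, hk.trans (by simp only [Fin.le_def]; omega), rfl⟩
    · exact ⟨j, le_rfl, rfl⟩

lemma val_add_one_eq_of_adj (hG : G.IsAcyclic) {i j : Fin n} (hij : i < j)
    (hadj : G.Adj (S.s i) (S.s j)) :
    (i : ℕ) + 1 = j := by
  obtain ⟨p, hp, hlen, -⟩ := S.exists_isPath i j hij.le
  have := hG.length_eq_one_of_adj hadj hp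
  omega

lemma eq_of_adj_of_adj (hG : G.IsAcyclic) {v : V} (hv : v ∉ range S.s) {i j : Fin n}
    (hij : i ≤ j) (hvi : G.Adj v (S.s i)) (hvj : G.Adj v (S.s j)) : i = j := by
  obtain ⟨p, hp, hlen, hsupp⟩ := S.exists_isPath i j hij
  have := hG.length_eq_one_of_adj hvi.symm (hp.concat (fun hv' => hv (hsupp v hv')) hvj.symm)
  simp only [Walk.length_concat] at this
  exact Fin.ext (by omega)

lemma foot_eq_of_adj (hG : G.IsAcyclic) {v : V} (hv : v ∉ range S.s) {i : Fin n}
    (hvi : G.Adj v (S.s i)) :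
    S.foot v = i := by
  rcases le_total (S.foot v) i with hle | hle
  · exact S.eq_of_adj_of_adj hG hv hle (S.adj_foot hv) hvi
  · exact (S.eq_of_adj_of_adj hG hv hle hvi (S.adj_foot hv)).symm

lemma not_adj_of_notMem_range (hG : G.IsAcyclic) {v w : V} (hv : v ∉ range S.s)
    (hw : w ∉ range S.s) :
    ¬ G.Adj v w := by
  wlog hle : S.foot v ≤ S.foot w generalizing v w
  · exact fun hvw => this hw hv (le_of_not_ge hle) hvw.symm
  intro hvw
  obtain ⟨p, hp, hlen, hsupp⟩ := S.exists_isPath _ _ hle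
  have hq := hp.concat (fun hw' => hw (hsupp w hw')) (S.adj_foot hw).symm
  have hq' := hq.cons (u := v) (h := S.adj_foot hv) (by
    simp only [Walk.support_concat, List.mem_append, List.mem_singleton, not_or]
    exact ⟨fun hv' => hv (hsupp v hv'), hvw.ne⟩)
  have := hG.length_eq_one_of_adj hvw hq'
  simp only [Walk.length_cons, Walk.length_concat] at this
  omega

open ReebDrawing

/-- The offset of `v` to the right of the column of its foot, chosen so that the segment from
the foot to `v` has `|dx/dy| = 1 / (K * (ρ v + 1))`. -/
noncomputable def offset (h : V → ℝ) (K : ℝ) (ρ : V → ℕ) (v : V) : ℝ :=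
  |h v - h (S.s (S.foot v))| / (K * (ρ v + 1))

noncomputable def xCoord (h : V → ℝ) (K : ℝ) (ρ : V → ℕ) (v : V) : ℝ :=
  S.foot v + S.offset h K ρ v

variable {h : V → ℝ} {K : ℝ} {ρ : V → ℕ}

lemma xCoord_s (i : Fin n) : S.xCoord h K ρ (S.s i) = i := by
  simp [xCoord, offset, foot_s]

lemma offset_nonneg (hK : ∀ v w, |h v - h w| < K) (v : V) : 0 ≤ S.offset h K ρ v := by
  have := (abs_nonneg _).trans_lt (hK v v)
  unfold offset
  positivity

lemma offset_lt_one (hK : ∀ v w, |h v - h w| < K) (v : V) : S.offset h K ρ v < 1 := by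
  have hK0 := (abs_nonneg _).trans_lt (hK v v)
  rw [offset, div_lt_one (by positivity)]
  nlinarith [hK v (S.s (S.foot v)), (Nat.cast_nonneg (ρ v) : (0 : ℝ) ≤ ρ v)]

lemma offset_pos (hne : ∀ v w, G.Adj v w → h v ≠ h w) (hK : ∀ v w, |h v - h w| < K) {v : V}
    (hv : v ∉ range S.s) : 0 < S.offset h K ρ v := by
  have := (abs_nonneg _).trans_lt (hK v v)
  have := sub_ne_zero.2 (hne _ _ (S.adj_foot hv))
  unfold offset
  positivity

lemma offset_eq_zero_iff (hne : ∀ v w, G.Adj v w → h v ≠ h w) (hK : ∀ v w, |h v - h w| < K)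
    {v : V} : S.offset h K ρ v = 0 ↔ v ∈ range S.s := by
  refine ⟨fun h0 => ?_, fun ⟨i, hi⟩ => by simp [← hi, offset, foot_s]⟩
  by_contra hv
  exact (S.offset_pos hne hK hv).ne' h0

lemma floor_xCoord (hK : ∀ v w, |h v - h w| < K) (v : V) :
    ⌊S.xCoord h K ρ v⌋₊ = S.foot v := by
  rw [Nat.floor_eq_iff (by have := S.offset_nonneg (ρ := ρ) hK v; unfold xCoord; positivity)]
  exact ⟨by simpa [xCoord] using S.offset_nonneg hK v,
    by simpa [xCoord] using S.offset_lt_one hK v⟩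

lemma abs_lineSlope_foot (hne : ∀ v w, G.Adj v w → h v ≠ h w) (hK : ∀ v w, |h v - h w| < K)
    {v : V} (hv : v ∉ range S.s) :
    |lineSlope (S.xCoord h K ρ) h (S.s (S.foot v)) v| = 1 / (K * (ρ v + 1)) := by
  have hK0 := (abs_nonneg _).trans_lt (hK v v)
  have hΔ := abs_pos.2 (sub_ne_zero.2 (hne _ _ (S.adj_foot hv)))
  rw [lineSlope, xCoord_s, xCoord, offset, add_sub_cancel_left, abs_div, abs_div, abs_abs,
    abs_of_pos (by positivity : (0 : ℝ) < K * (ρ v + 1))]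
  field_simp

lemma injective_xCoord (hne : ∀ v w, G.Adj v w → h v ≠ h w) (hK : ∀ v w, |h v - h w| < K)
    (hρ : Function.Injective ρ) :
    Function.Injective fun v => ((S.xCoord h K ρ v, h v) : ℝ × ℝ) := by
  intro v w hvw
  obtain ⟨hx, hh⟩ := Prod.ext_iff.1 hvw
  simp only at hx hh
  have hfoot : S.foot v = S.foot w :=
    Fin.ext (by simpa [S.floor_xCoord hK] using congrArg Nat.floor hx)
  have hoff : S.offset h K ρ v = S.offset h K ρ w := by
    simpa [xCoord, hfoot] using hx
  have hrange : v ∈ range S.s ↔ w ∈ range S.s := by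
    rw [← S.offset_eq_zero_iff hne hK, hoff, S.offset_eq_zero_iff hne hK]
  by_cases hv : v ∈ range S.s
  · rw [← S.s_foot hv, ← S.s_foot (hrange.1 hv), hfoot]
  · have hK0 := (abs_nonneg _).trans_lt (hK v v)
    have hΔ := abs_pos.2 (sub_ne_zero.2 (hne _ _ (S.adj_foot hv)))
    rw [offset, offset, ← hfoot, ← hh, div_eq_mul_inv, div_eq_mul_inv, mul_right_inj' hΔ.ne',
      inv_inj, mul_right_inj' hK0.ne'] at hoff
    exact hρ (by exact_mod_cast add_right_cancel hoff)

lemma injOn_xCoord_range : InjOn (S.xCoord h K ρ) (range S.s) := by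
  rintro _ ⟨i, rfl⟩ _ ⟨j, rfl⟩ hij
  rw [xCoord_s, xCoord_s, Nat.cast_inj, Fin.val_inj] at hij
  rw [hij]

lemma isStripEdge_succ {i j : Fin n} (hij : (i : ℕ) + 1 = j) :
    IsStripEdge (range S.s) (S.xCoord h K ρ) (S.s i) (S.s j) := by
  have hj : (j : ℝ) = i + 1 := by exact_mod_cast hij.symm
  simp only [IsStripEdge, xCoord_s, hj]
  exact ⟨mem_range_self i, by linarith, le_rfl, fun _ => mem_range_self j⟩

lemma isStripEdge_foot (hne : ∀ v w, G.Adj v w → h v ≠ h w) (hK : ∀ v w, |h v - h w| < K)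
    {v : V} (hv : v ∉ range S.s) :
    IsStripEdge (range S.s) (S.xCoord h K ρ) (S.s (S.foot v)) v := by
  have h0 := S.offset_pos (ρ := ρ) hne hK hv
  have h1 := S.offset_lt_one (ρ := ρ) hK v
  have hx : S.xCoord h K ρ v = S.foot v + S.offset h K ρ v := rfl
  simp only [IsStripEdge, xCoord_s, hx]
  exact ⟨mem_range_self _, by linarith, by linarith, fun heq => by linarith⟩

lemma exists_isStripEdge (hG : G.IsAcyclic) (hne : ∀ v w, G.Adj v w → h v ≠ h w)
    (hK : ∀ v w, |h v - h w| < K) {v w : V} (hvw : G.Adj v w) :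
    ∃ u a, s(u, a) = s(v, w) ∧ IsStripEdge (range S.s) (S.xCoord h K ρ) u a := by
  wlog hv : v ∈ range S.s generalizing v w
  · have hw : w ∈ range S.s := by
      by_contra hw
      exact S.not_adj_of_notMem_range hG hv hw hvw
    obtain ⟨u, a, he, hstrip⟩ := this hvw.symm hw
    exact ⟨u, a, he.trans Sym2.eq_swap, hstrip⟩
  obtain ⟨i, rfl⟩ := hv
  by_cases hw : w ∈ range S.s
  · obtain ⟨j, rfl⟩ := hw
    rcases lt_or_gt_of_ne (fun hij : i = j => hvw.ne (congrArg S.s hij)) with hij | hji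
    · exact ⟨_, _, rfl, S.isStripEdge_succ (S.val_add_one_eq_of_adj hG hij hvw)⟩
    · exact ⟨_, _, Sym2.eq_swap, S.isStripEdge_succ (S.val_add_one_eq_of_adj hG hji hvw.symm)⟩
  · have hfoot := S.foot_eq_of_adj hG hw hvw.symm
    exact ⟨_, _, rfl, hfoot ▸ S.isStripEdge_foot hne hK hw⟩

lemma eq_succ_or_foot_eq_of_adj (hG : G.IsAcyclic) {i : Fin n} {a : V} (ha : G.Adj (S.s i) a)
    (hlt : S.xCoord h K ρ (S.s i) < S.xCoord h K ρ a) :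
    (∃ j : Fin n, (i : ℕ) + 1 = j ∧ a = S.s j) ∨ (a ∉ range S.s ∧ S.foot a = i) := by
  by_cases hi : a ∈ range S.s
  · obtain ⟨j, rfl⟩ := hi
    rw [xCoord_s, xCoord_s, Nat.cast_lt, ← Fin.lt_def] at hlt
    exact Or.inl ⟨j, S.val_add_one_eq_of_adj hG hlt ha, rfl⟩
  · exact Or.inr ⟨hi, S.foot_eq_of_adj hG hi ha.symm⟩

lemma one_div_lt_abs_lineSlope_succ (hne : ∀ v w, G.Adj v w → h v ≠ h w)
    (hK : ∀ v w, |h v - h w| < K) {i j : Fin n} (hij : (i : ℕ) + 1 = j) :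
    1 / K < |lineSlope (S.xCoord h K ρ) h (S.s i) (S.s j)| := by
  have hj : (j : ℝ) = i + 1 := by exact_mod_cast hij.symm
  have hΔ := abs_pos.2 (sub_ne_zero.2 (hne _ _ (S.adj i j hij)).symm)
  rw [lineSlope, xCoord_s, xCoord_s, hj, add_sub_cancel_left, abs_div, abs_one]
  exact one_div_lt_one_div_of_lt hΔ (hK _ _)

lemma abs_lineSlope_foot_le (hne : ∀ v w, G.Adj v w → h v ≠ h w)
    (hK : ∀ v w, |h v - h w| < K) {v : V} (hv : v ∉ range S.s) :
    |lineSlope (S.xCoord h K ρ) h (S.s (S.foot v)) v| ≤ 1 / K := by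
  have hK0 := (abs_nonneg _).trans_lt (hK v v)
  rw [S.abs_lineSlope_foot hne hK hv]
  exact one_div_le_one_div_of_le hK0 (le_mul_of_one_le_right hK0.le (by simp))

lemma injOn_lineSlope (hG : G.IsAcyclic) (hne : ∀ v w, G.Adj v w → h v ≠ h w)
    (hK : ∀ v w, |h v - h w| < K) (hρ : Function.Injective ρ) (i : Fin n) :
    InjOn (lineSlope (S.xCoord h K ρ) h (S.s i))
      {a | G.Adj (S.s i) a ∧ S.xCoord h K ρ (S.s i) < S.xCoord h K ρ a} := by
  rintro a ⟨ha, hlta⟩ b ⟨hb, hltb⟩ hab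
  have habs := congrArg abs hab
  rcases S.eq_succ_or_foot_eq_of_adj hG ha hlta with ⟨j, hij, rfl⟩ | ⟨ha', rfl⟩ <;>
    rcases S.eq_succ_or_foot_eq_of_adj hG hb hltb with ⟨j', hij', rfl⟩ | ⟨hb', hfoot⟩
  · rw [Fin.ext (hij.symm.trans hij' : (j : ℕ) = j')]
  · have hb_le := S.abs_lineSlope_foot_le (ρ := ρ) hne hK hb'
    rw [hfoot] at hb_le
    linarith [S.one_div_lt_abs_lineSlope_succ (ρ := ρ) hne hK hij]
  · linarith [S.one_div_lt_abs_lineSlope_succ (ρ := ρ) hne hK hij',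
      S.abs_lineSlope_foot_le (ρ := ρ) hne hK ha']
  · have hK0 := (abs_nonneg _).trans_lt (hK a a)
    rw [S.abs_lineSlope_foot hne hK ha', ← hfoot, S.abs_lineSlope_foot hne hK hb',
      one_div, one_div, inv_inj, mul_right_inj' hK0.ne'] at habs
    exact hρ (by exact_mod_cast add_right_cancel habs)

end CaterpillarSpine

end SimpleGraph

theorem caterpillar_reeb_graph_planar_general
    {V : Type*} [Fintype V] (G : SimpleGraph V) (h : V → ℝ)
    (hcat : IsCaterpillar G)
    (hne : ∀ v w : V, G.Adj v w → h v ≠ h w) :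
    ∃ D : ReebDrawing G h, D.crossingSet = ∅ := by
  obtain ⟨n, ⟨S⟩⟩ := hcat.exists_caterpillarSpine
  have hG : G.IsAcyclic := hcat.1.isAcyclic
  obtain ⟨K, hK⟩ : ∃ K, ∀ v w, |h v - h w| < K := by
    obtain ⟨K, hK⟩ := (finite_range fun p : V × V => |h p.1 - h p.2|).bddAbove
    exact ⟨K + 1, fun v w => (hK (mem_range_self (v, w))).trans_lt (lt_add_one K)⟩
  let ρ : V → ℕ := fun v => Fintype.equivFin V v
  have hρ : Function.Injective ρ := Fin.val_injective.comp (Fintype.equivFin V).injective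
  refine ⟨.straightLine (S.xCoord h K ρ) (S.injective_xCoord hne hK hρ) hne,
    ReebDrawing.crossingSet_straightLine_eq_empty (range S.s) ?_ S.injOn_xCoord_range
      ?_ fun v w hvw => S.exists_isStripEdge hG hne hK hvw⟩
  · rintro _ ⟨i, rfl⟩
    exact ⟨i, by rw [S.xCoord_s]; rfl⟩
  · rintro _ ⟨i, rfl⟩
    exact S.injOn_lineSlope hG hne hK hρ i

/-- Let `(G, h)` be a Reeb graph (in particular, adjacent vertices
have distinct heights, so that edges can be drawn `y`-monotonically) such that `G` is
a caterpillar in which every vertex has degree at most `3`. Then `(G, h)` admits a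
drawing with zero crossings. -/
theorem caterpillar_reeb_graph_planar
    {V : Type*} [Fintype V] (G : SimpleGraph V) (h : V → ℝ)
    (hcat : IsCaterpillar G)
    (hdeg : ∀ v : V, (G.neighborSet v).ncard ≤ 3)
    (hne : ∀ v w : V, G.Adj v w → h v ≠ h w) :
    ∃ D : ReebDrawing G h, D.crossingSet = ∅ :=
  caterpillar_reeb_graph_planar_general G h hcat hne
end

section
/- There exists a Reeb graph (G, h) such that G is a finite tree, h is injective on the vertices, and every drawing of (G, h) has at least one crossing. -/
open Set

/-
The witness is a tripod: a root at height `0` with three children `mid i` at heights `1, 2, 3`,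
each carrying a leaf `top i` above all children and a leaf `bot i` below the root. In a
crossing-free drawing the path `bot j – mid j – top j` is a wall over all the heights `[0, 3]`
met by the other branches, and the edges `root – mid i – bot i` (for `i ≠ j`) are disjoint
from it, so at height `0` the root and the lower edge of branch `i` lie on the same side of the
lower edge of branch `j`. Hence each of the three lower edges is met at height `0` either to
the left of both others or to the right of both, which is impossible for three distinct reals.
-/

theorem lt_iff_lt_of_forall_ne {f g : ℝ → ℝ} {a b : ℝ} (hf : ContinuousOn f (uIcc a b))
    (hg : ContinuousOn g (uIcc a b)) (hfg : ∀ y ∈ uIcc a b, f y ≠ g y) :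
    f a < g a ↔ f b < g b := by
  have hzero : (0 : ℝ) ∉ uIcc (g a - f a) (g b - f b) := fun h0 => by
    obtain ⟨y, hy, hy0⟩ := intermediate_value_uIcc (hg.sub hf) h0
    exact hfg y hy (sub_eq_zero.mp hy0).symm
  constructor
  · intro hlt
    by_contra! hge
    exact hzero (mem_uIcc.mpr (Or.inr ⟨by linarith, by linarith⟩))
  · intro hlt
    by_contra! hge
    exact hzero (mem_uIcc.mpr (Or.inl ⟨by linarith, by linarith⟩))

namespace ReebDrawing

variable {V : Type*} {G : SimpleGraph V} {h : V → ℝ} (D : ReebDrawing G h)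

theorem curve_apply_right {v w : V} (hvw : G.Adj v w) : D.curve s(v, w) (h w) = D.x w := by
  rw [Sym2.eq_swap]
  exact D.curve_end w v hvw.symm

variable {D} {v w a b : V}

theorem curve_ne_curve (hD : D.crossingSet = ∅) (hvw : G.Adj v w) (hab : G.Adj a b)
    (hdisj : ∀ u ∈ s(v, w), u ∉ s(a, b)) {y : ℝ}
    (hy : y ∈ uIcc (h v) (h w) ∩ uIcc (h a) (h b)) :
    D.curve s(v, w) y ≠ D.curve s(a, b) y := by
  intro heq
  have hne : s(v, w) ≠ s(a, b) := fun he =>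
    hdisj v (Sym2.mem_mk_left v w) (he ▸ Sym2.mem_mk_left v w)
  have hcross : D.IsCrossing (D.curve s(v, w) y, y) v w a b :=
    ⟨hvw, hab, hne, ⟨hy.1, rfl⟩, ⟨hy.2, heq⟩, fun u hu hu' =>
      absurd (Sym2.mem_iff.mpr hu') (hdisj u (Sym2.mem_iff.mpr hu))⟩
  exact (eq_empty_iff_forall_notMem.mp hD) (s(s(v, w), s(a, b)), _) ⟨v, w, a, b, rfl, hcross⟩

theorem curve_lt_curve_iff (hD : D.crossingSet = ∅) (hvw : G.Adj v w) (hab : G.Adj a b)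
    (hdisj : ∀ u ∈ s(v, w), u ∉ s(a, b)) {y₁ y₂ : ℝ}
    (hy₁ : y₁ ∈ uIcc (h v) (h w) ∩ uIcc (h a) (h b))
    (hy₂ : y₂ ∈ uIcc (h v) (h w) ∩ uIcc (h a) (h b)) :
    D.curve s(v, w) y₁ < D.curve s(a, b) y₁ ↔
      D.curve s(v, w) y₂ < D.curve s(a, b) y₂ := by
  have hsub : uIcc y₁ y₂ ⊆ uIcc (h v) (h w) ∩ uIcc (h a) (h b) :=
    (ordConnected_uIcc.inter ordConnected_uIcc).uIcc_subset hy₁ hy₂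
  exact lt_iff_lt_of_forall_ne (D.curve_cont _ hvw).continuousOn (D.curve_cont _ hab).continuousOn
    fun y hy => curve_ne_curve hD hvw hab hdisj (hsub hy)

end ReebDrawing

theorem Fin.exists_lt_lt_of_injective {α : Type*} [LinearOrder α] {p : Fin 3 → α}
    (hp : Function.Injective p) : ∃ i j k, p i < p j ∧ p j < p k := by
  have h01 := hp.ne (show (0 : Fin 3) ≠ 1 by decide)
  have h02 := hp.ne (show (0 : Fin 3) ≠ 2 by decide)
  have h12 := hp.ne (show (1 : Fin 3) ≠ 2 by decide)
  rcases h01.lt_or_gt with h01 | h01 <;> rcases h02.lt_or_gt with h02 | h02 <;>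
    rcases h12.lt_or_gt with h12 | h12
  all_goals first
    | exact ⟨0, 1, 2, h01, h12⟩ | exact ⟨2, 1, 0, h12, h01⟩ | exact ⟨1, 0, 2, h01, h02⟩
    | exact ⟨2, 0, 1, h02, h01⟩ | exact ⟨0, 2, 1, h02, h12⟩ | exact ⟨1, 2, 0, h12, h02⟩

namespace ReebTripod

inductive Vertex : Type
  | root
  | mid (i : Fin 3)
  | top (i : Fin 3)
  | bot (i : Fin 3)
  deriving DecidableEq, Fintype

open Vertex

def parent : Vertex → Option Vertex
  | root => none
  | mid _ => some root
  | top i => some (mid i)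
  | bot i => some (mid i)

def graph : SimpleGraph Vertex := SimpleGraph.fromRel fun v w => parent v = some w

instance : DecidableRel graph.Adj := fun _ _ => inferInstanceAs (Decidable (_ ∧ _))

theorem adj_root_mid (i : Fin 3) : graph.Adj root (mid i) := by simp [graph, parent]

theorem adj_mid_top (i : Fin 3) : graph.Adj (mid i) (top i) := by simp [graph, parent]

theorem adj_mid_bot (i : Fin 3) : graph.Adj (mid i) (bot i) := by simp [graph, parent]

theorem reachable_root (v : Vertex) : graph.Reachable root v := by
  cases v with
  | root => rfl
  | mid i => exact (adj_root_mid i).reachable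
  | top i => exact (adj_root_mid i).reachable.trans (adj_mid_top i).reachable
  | bot i => exact (adj_root_mid i).reachable.trans (adj_mid_bot i).reachable

theorem isTree_graph : graph.IsTree := by
  rw [SimpleGraph.isTree_iff_connected_and_card, Nat.card_eq_fintype_card,
    Nat.card_eq_fintype_card, ← SimpleGraph.edgeFinset_card]
  exact ⟨(SimpleGraph.connected_iff_exists_forall_reachable _).mpr ⟨root, reachable_root⟩,
    by decide⟩

noncomputable def height : Vertex → ℝ
  | root => 0
  | mid i => (i : ℕ) + 1
  | top i => (i : ℕ) + 4
  | bot i => -((i : ℕ) + 1)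

theorem cast_mem_Icc (i : Fin 3) : ((i : ℕ) : ℝ) ∈ Icc 0 2 :=
  ⟨Nat.cast_nonneg _, by exact_mod_cast Nat.le_of_lt_succ i.isLt⟩

theorem height_injective : Function.Injective height := by
  intro v w hvw
  rcases v with _ | i | i | i <;> rcases w with _ | j | j | j <;> simp [height] at hvw ⊢
  all_goals grind [cast_mem_Icc]

variable {D : ReebDrawing graph height}

noncomputable def lowerEdgeX (D : ReebDrawing graph height) (i : Fin 3) : ℝ :=
  D.curve s(mid i, bot i) (height root)

theorem lowerEdgeX_injective (hD : D.crossingSet = ∅) : Function.Injective (lowerEdgeX D) := by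
  intro i j hij
  by_contra hne
  have hi := cast_mem_Icc i
  have hj := cast_mem_Icc j
  refine ReebDrawing.curve_ne_curve hD (adj_mid_bot i) (adj_mid_bot j) (by simp [hne]) ?_ hij
  simp only [height, mem_inter_iff, mem_uIcc]
  grind

theorem x_root_lt_iff_of_lt (hD : D.crossingSet = ∅) {i j : Fin 3} (hij : i < j) :
    D.x root < lowerEdgeX D j ↔ lowerEdgeX D i < lowerEdgeX D j := by
  have hi := cast_mem_Icc i
  have hj := cast_mem_Icc j
  have hle : ((i : ℕ) : ℝ) ≤ (j : ℕ) := by exact_mod_cast hij.le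
  calc D.x root < lowerEdgeX D j ↔ D.x (mid i) < D.curve s(mid j, bot j) (height (mid i)) := by
        rw [← D.curve_end root (mid i) (adj_root_mid i), ← D.curve_apply_right (adj_root_mid i)]
        refine ReebDrawing.curve_lt_curve_iff hD (adj_root_mid i) (adj_mid_bot j)
          (by simp [hij.ne]) ?_ ?_
          <;> simp only [height, mem_inter_iff, mem_uIcc] <;> grind
    _ ↔ _ := by
        rw [← D.curve_end (mid i) (bot i) (adj_mid_bot i)]
        refine ReebDrawing.curve_lt_curve_iff hD (adj_mid_bot i) (adj_mid_bot j)
          (by simp [hij.ne]) ?_ ?_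
          <;> simp only [height, mem_inter_iff, mem_uIcc] <;> grind

theorem x_root_lt_iff_of_gt (hD : D.crossingSet = ∅) {i j : Fin 3} (hji : j < i) :
    D.x root < lowerEdgeX D j ↔ lowerEdgeX D i < lowerEdgeX D j := by
  have hi := cast_mem_Icc i
  have hj := cast_mem_Icc j
  have hle : ((j : ℕ) : ℝ) ≤ (i : ℕ) := by exact_mod_cast hji.le
  have hne := hji.ne'
  -- The lower edge of branch `j` ends below `mid i`; the wall goes on along `mid j – top j`.
  calc D.x root < lowerEdgeX D j
        ↔ D.curve s(root, mid i) (height (mid j)) < D.x (mid j) := by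
        rw [← D.curve_end root (mid i) (adj_root_mid i),
          ← D.curve_end (mid j) (bot j) (adj_mid_bot j)]
        refine ReebDrawing.curve_lt_curve_iff hD (adj_root_mid i) (adj_mid_bot j)
          (by simp [hne]) ?_ ?_
          <;> simp only [height, mem_inter_iff, mem_uIcc] <;> grind
    _ ↔ D.x (mid i) < D.curve s(mid j, top j) (height (mid i)) := by
        rw [← D.curve_end (mid j) (top j) (adj_mid_top j),
          ← D.curve_apply_right (adj_root_mid i)]
        refine ReebDrawing.curve_lt_curve_iff hD (adj_root_mid i) (adj_mid_top j)
          (by simp [hne]) ?_ ?_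
          <;> simp only [height, mem_inter_iff, mem_uIcc] <;> grind
    _ ↔ D.curve s(mid i, bot i) (height (mid j)) < D.x (mid j) := by
        rw [← D.curve_end (mid j) (top j) (adj_mid_top j),
          ← D.curve_end (mid i) (bot i) (adj_mid_bot i)]
        refine ReebDrawing.curve_lt_curve_iff hD (adj_mid_bot i) (adj_mid_top j)
          (by simp [hne]) ?_ ?_
          <;> simp only [height, mem_inter_iff, mem_uIcc] <;> grind
    _ ↔ _ := by
        rw [← D.curve_end (mid j) (bot j) (adj_mid_bot j)]
        refine ReebDrawing.curve_lt_curve_iff hD (adj_mid_bot i) (adj_mid_bot j)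
          (by simp [hne]) ?_ ?_
          <;> simp only [height, mem_inter_iff, mem_uIcc] <;> grind

theorem x_root_lt_iff (hD : D.crossingSet = ∅) {i j : Fin 3} (hij : i ≠ j) :
    D.x root < lowerEdgeX D j ↔ lowerEdgeX D i < lowerEdgeX D j :=
  hij.lt_or_gt.elim (x_root_lt_iff_of_lt hD) (x_root_lt_iff_of_gt hD)

theorem crossingSet_ne_empty (D : ReebDrawing graph height) : D.crossingSet ≠ ∅ := by
  intro hD
  obtain ⟨i, j, k, hij, hjk⟩ := Fin.exists_lt_lt_of_injective (lowerEdgeX_injective hD)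
  have hi := x_root_lt_iff hD (ne_of_apply_ne (lowerEdgeX D) hij.ne)
  have hk := x_root_lt_iff hD (ne_of_apply_ne (lowerEdgeX D) hjk.ne')
  exact lt_asymm hjk (hk.mp (hi.mpr hij))

end ReebTripod

/-- There exists a Reeb graph `(G, h)` such that `G` is a finite
tree, `h` is injective on the vertices, and every drawing of `(G, h)` has at least
one crossing. -/
theorem exists_tree_reeb_graph_nonplanar :
    ∃ (V : Type) (_ : Fintype V) (G : SimpleGraph V) (h : V → ℝ),
      G.IsTree ∧ Function.Injective h ∧
      ∀ D : ReebDrawing G h, D.crossingSet ≠ ∅ :=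
  ⟨ReebTripod.Vertex, inferInstance, ReebTripod.graph, ReebTripod.height, ReebTripod.isTree_graph,
    ReebTripod.height_injective, ReebTripod.crossingSet_ne_empty⟩
end

section
/- Let (G, h) be a Reeb graph such that G is a cycle with n vertices (n even, n ≥ 6) whose heights alternate along the cycle between two values b < t. Then in every drawing of (G, h), at most two edges of the cycle are involved in no crossing. -/
open Set

/-!
Fix a height `y` strictly between `b` and `t`; every edge of the cycle passes through it.
If an edge `E` has no crossings, no other edge meets it strictly between the two levels, so
by the intermediate value theorem another edge is right of `E` at height `y` exactly when
its endpoint on a level is right of the endpoint of `E` on that level. Hence two edges at a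
vertex off `E` are on the same side of `E`, and walking along the path `G - E` shows that all
other edges are on one side of `E`: an uncrossed edge is leftmost or rightmost at height `y`.
Uncrossed edges meet no other edge at height `y`, so at most two of them are extreme.
-/

theorem IsPreconnected.lt_iff_lt_of_forall_ne {X α : Type*} [TopologicalSpace X]
    [LinearOrder α] [TopologicalSpace α] [OrderClosedTopology α] {s : Set X}
    (hs : IsPreconnected s) {a b : X} (ha : a ∈ s) (hb : b ∈ s) {f g : X → α}
    (hf : ContinuousOn f s) (hg : ContinuousOn g s) (hne : ∀ x ∈ s, f x ≠ g x) :
    f a < g a ↔ f b < g b := by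
  suffices key : ∀ a ∈ s, ∀ b ∈ s, f a < g a → f b < g b from
    ⟨key a ha b hb, key b hb a ha⟩
  intro a ha b hb hab
  by_contra! hba
  obtain ⟨x, hx, hfx⟩ := hs.intermediate_value₂ ha hb hf hg hab.le hba
  exact hne x hx hfx

theorem Set.mem_uIoo_of_mem_uIcc_of_ne {α : Type*} [LinearOrder α] {a b y z : α}
    (hy : y ∈ uIoo a b) (hz : z ∈ uIcc y a) (hza : z ≠ a) : z ∈ uIoo a b := by
  rcases le_total a b with hab | hab
  · rw [uIoo_of_le hab] at hy ⊢
    rw [uIcc_of_ge hy.1.le] at hz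
    exact ⟨lt_of_le_of_ne hz.1 hza.symm, hz.2.trans_lt hy.2⟩
  · rw [uIoo_of_ge hab] at hy ⊢
    rw [uIcc_of_le hy.2.le] at hz
    exact ⟨hy.1.trans_le hz.1, lt_of_le_of_ne hz.2 hza⟩

theorem Set.encard_le_two_of_forall_lt_iff_lt {ι α : Type*} [LinearOrder α] {S : Set ι}
    {f : ι → α} (hf : S.InjOn f)
    (hS : ∀ i ∈ S, ∀ j ∈ S, ∀ k ∈ S, j ≠ i → k ≠ i → (f i < f j ↔ f i < f k)) :
    S.encard ≤ 2 := by
  by_contra! hlt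
  obtain ⟨T, hTS, hT⟩ := exists_subset_encard_eq (k := 3) (Order.add_one_le_of_lt hlt)
  obtain ⟨x, y, z, hxy, hxz, hyz, rfl⟩ := encard_eq_three.mp hT
  have hx : x ∈ S := hTS (by simp)
  have hy : y ∈ S := hTS (by simp)
  have hz : z ∈ S := hTS (by simp)
  have hfxy := hf.ne hx hy hxy
  have hfxz := hf.ne hx hz hxz
  have hfyz := hf.ne hy hz hyz
  have := hS x hx y hy z hz hxy.symm hxz.symm
  have := hS y hy x hx z hz hxy hyz.symm
  have := hS z hz x hx y hy hxz hyz
  grind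

def IsTwoLevel {V : Type*} (G : SimpleGraph V) (h : V → ℝ) (b t : ℝ) : Prop :=
  ∀ v w, G.Adj v w → h v = b ∧ h w = t ∨ h v = t ∧ h w = b

theorem IsTwoLevel.mem_uIoo {V : Type*} {G : SimpleGraph V} {h : V → ℝ} {b t y : ℝ}
    (hlev : IsTwoLevel G h b t) (hy : y ∈ Ioo b t) {v w : V} (hvw : G.Adj v w) :
    y ∈ uIoo (h v) (h w) := by
  rcases hlev v w hvw with ⟨hv, hw⟩ | ⟨hv, hw⟩
  · rwa [hv, hw, uIoo_of_lt (hy.1.trans hy.2)]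
  · rwa [hv, hw, uIoo_comm, uIoo_of_lt (hy.1.trans hy.2)]

namespace IsCycleEnum

variable {V : Type*} {G : SimpleGraph V}

theorem isTwoLevel {m : ℕ} {e : Fin (2 * m) ≃ V} (hcyc : IsCycleEnum G e) {h : V → ℝ}
    {b t : ℝ} (hh : ∀ i : Fin (2 * m), h (e i) = if i.val % 2 = 0 then t else b) :
    IsTwoLevel G h b t := by
  intro v w hvw
  obtain ⟨i, rfl⟩ := e.surjective v
  obtain ⟨j, rfl⟩ := e.surjective w
  have hmod (k : ℕ) : k % (2 * m) % 2 = k % 2 := Nat.mod_mod_of_dvd k (dvd_mul_right 2 m)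
  have hpar : i.val % 2 ≠ j.val % 2 := by
    rcases (hcyc i j).mp hvw with hij | hji
    · have := hmod (i.val + 1); rw [hij] at this; omega
    · have := hmod (j.val + 1); rw [hji] at this; omega
  rw [hh i, hh j]
  split_ifs <;> simp_all

variable {n : ℕ} {e : Fin n ≃ V}

theorem adj_iff [NeZero n] (hcyc : IsCycleEnum G e) (k l : Fin n) :
    G.Adj (e k) (e l) ↔ l = k + 1 ∨ k = l + 1 := by
  have hsucc (i j : Fin n) : j = i + 1 ↔ (i.val + 1) % n = j.val := by
    rw [Fin.ext_iff, Fin.val_add, Fin.val_one', Nat.add_mod_mod, eq_comm]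
  rw [hcyc, hsucc, hsucc]

theorem exists_eq_mk [NeZero n] (hcyc : IsCycleEnum G e) {E : Sym2 V} (hE : E ∈ G.edgeSet) :
    ∃ k, E = s(e k, e (k + 1)) := by
  induction E using Sym2.ind with
  | _ v w =>
    obtain ⟨k, rfl⟩ := e.surjective v
    obtain ⟨l, rfl⟩ := e.surjective w
    rcases (hcyc.adj_iff k l).mp hE with rfl | rfl
    · exact ⟨k, rfl⟩
    · exact ⟨l, Sym2.eq_swap⟩

end IsCycleEnum

open Fin.CommRing in
theorem Fin.iff_of_forall_iff_add_one {n : ℕ} [NeZero n] {P : Fin n → Prop} (i : Fin n)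
    (hP : ∀ k, k ≠ i → k + 1 ≠ i → (P k ↔ P (k + 1))) {k l : Fin n} (hk : k ≠ i)
    (hl : l ≠ i) : P k ↔ P l := by
  have hne (j : ℕ) (hj : j < n) (hj0 : j ≠ 0) : i + (j : Fin n) ≠ i := by
    intro hij
    have : (j : Fin n) = 0 := by simpa using hij
    exact hj0 (Nat.eq_zero_of_dvd_of_lt (Fin.natCast_eq_zero.mp this) hj)
  have hchain (j : ℕ) (hj : j + 1 < n) : P (i + 1) ↔ P (i + 1 + j) := by
    induction j with
    | zero => simp
    | succ j ih =>
      have h₁ : i + 1 + (j : Fin n) ≠ i := by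
        convert hne (j + 1) (by omega) (by omega) using 1; push_cast; ring
      have h₂ : i + 1 + (j : Fin n) + 1 ≠ i := by
        convert hne (j + 2) hj (by omega) using 1; push_cast; ring
      rw [ih (by omega), hP _ h₁ h₂]
      push_cast; ring_nf
  suffices hfrom : ∀ k, k ≠ i → (P (i + 1) ↔ P k) from (hfrom k hk).symm.trans (hfrom l hl)
  intro k hk
  set j := (k - (i + 1)).val
  have hkj : k = i + 1 + (j : Fin n) := by simp [j]
  have hj : j + 1 < n := by
    refine lt_of_le_of_ne (k - (i + 1)).isLt fun hjn => hk ?_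
    rw [hkj, add_assoc, ← Nat.cast_one, ← Nat.cast_add, add_comm 1 j, hjn]
    simp
  rw [hkj]
  exact hchain j hj

namespace ReebDrawing

variable {V : Type*} {G : SimpleGraph V} {h : V → ℝ} (D : ReebDrawing G h)

theorem curve_ne_of_edgeCrossings_eq_empty {v w v' w' : V} (hvw : G.Adj v w)
    (hE : D.edgeCrossings s(v, w) = ∅) (hvw' : G.Adj v' w') (hne : s(v', w') ≠ s(v, w))
    {y : ℝ} (hy : y ∈ uIoo (h v) (h w)) (hy' : y ∈ uIcc (h v') (h w')) :
    D.curve s(v, w) y ≠ D.curve s(v', w') y := by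
  intro heq
  have hcross : D.IsCrossing (D.curve s(v, w) y, y) v w v' w' := by
    refine ⟨hvw, hvw', hne.symm, ⟨uIoo_subset_uIcc_self hy, rfl⟩, ⟨hy', heq⟩, ?_⟩
    rintro u (rfl | rfl) - hu <;> have hyu : y = h u := congrArg Prod.snd hu
    · exact left_notMem_uIoo (hyu ▸ hy)
    · exact right_notMem_uIoo (hyu ▸ hy)
  have hmem : (s(v', w'), (D.curve s(v, w) y, y)) ∈ D.edgeCrossings s(v, w) :=
    ⟨v, w, v', w', rfl, rfl, hcross⟩
  rwa [hE] at hmem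

theorem curve_lt_iff_x_lt {v w a c : V} (hvw : G.Adj v w) (hE : D.edgeCrossings s(v, w) = ∅)
    (hac : G.Adj a c) (ha : a ∉ s(v, w)) (hav : h a = h v) (hcw : h c = h w) {y : ℝ}
    (hy : y ∈ uIoo (h v) (h w)) :
    D.curve s(v, w) y < D.curve s(a, c) y ↔ D.x v < D.x a := by
  have hv : D.curve s(v, w) (h v) = D.x v := D.curve_end v w hvw
  have hxa : D.curve s(a, c) (h v) = D.x a := hav ▸ D.curve_end a c hac
  have hxne : D.x v ≠ D.x a := fun hx =>
    ha (D.inj (Prod.ext hx.symm hav) ▸ Sym2.mem_mk_left v w)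
  have hacE : s(a, c) ≠ s(v, w) := fun hacvw => ha (hacvw ▸ Sym2.mem_mk_left a c)
  rw [← hv, ← hxa]
  refine isPreconnected_uIcc.lt_iff_lt_of_forall_ne left_mem_uIcc right_mem_uIcc
    (D.curve_cont _ hvw).continuousOn (D.curve_cont _ hac).continuousOn fun z hz => ?_
  rcases eq_or_ne z (h v) with rfl | hzv
  · rwa [hv, hxa]
  · have hz' := mem_uIoo_of_mem_uIcc_of_ne hy hz hzv
    exact D.curve_ne_of_edgeCrossings_eq_empty hvw hE hac hacE hz'
      (hav ▸ hcw ▸ uIoo_subset_uIcc_self hz')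

section TwoLevel

variable {b t y : ℝ}

theorem curve_ne_of_isTwoLevel (hlev : IsTwoLevel G h b t) (hy : y ∈ Ioo b t) {E F : Sym2 V}
    (hE : E ∈ G.edgeSet) (hEc : D.edgeCrossings E = ∅) (hF : F ∈ G.edgeSet) (hne : F ≠ E) :
    D.curve E y ≠ D.curve F y := by
  induction E using Sym2.ind with | _ v w =>
  induction F using Sym2.ind with | _ v' w' =>
  exact D.curve_ne_of_edgeCrossings_eq_empty hE hEc hF hne (hlev.mem_uIoo hy hE)
    (uIoo_subset_uIcc_self (hlev.mem_uIoo hy hF))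

theorem curve_lt_iff_curve_lt_of_adj (hlev : IsTwoLevel G h b t) (hy : y ∈ Ioo b t)
    {v w a c₁ c₂ : V} (hvw : G.Adj v w) (hE : D.edgeCrossings s(v, w) = ∅) (ha : a ∉ s(v, w))
    (h₁ : G.Adj a c₁) (h₂ : G.Adj a c₂) :
    D.curve s(v, w) y < D.curve s(a, c₁) y ↔ D.curve s(v, w) y < D.curve s(a, c₂) y := by
  have hsum {u u' : V} (huu' : G.Adj u u') : h u + h u' = b + t := by
    rcases hlev u u' huu' with ⟨hu, hu'⟩ | ⟨hu, hu'⟩ <;> linarith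
  have hlevel {u u' : V} (huu' : G.Adj u u') : h u = b ∨ h u = t := by
    rcases hlev u u' huu' with ⟨hu, -⟩ | ⟨hu, -⟩ <;> simp [hu]
  have hwv : s(w, v) = s(v, w) := Sym2.eq_swap
  suffices key : ∀ c, G.Adj a c → (D.curve s(v, w) y < D.curve s(a, c) y ↔
      if h a = h v then D.x v < D.x a else D.x w < D.x a) by
    rw [key c₁ h₁, key c₂ h₂]
  intro c hac
  split_ifs with hav
  · exact D.curve_lt_iff_x_lt hvw hE hac ha hav (by linarith [hsum hvw, hsum hac])
      (hlev.mem_uIoo hy hvw)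
  · have haw : h a = h w := by grind [hlevel hac, hlevel hvw, hsum hvw]
    rw [← hwv] at hE ha ⊢
    exact D.curve_lt_iff_x_lt hvw.symm hE hac ha haw (by linarith [hsum hvw, hsum hac])
      (hlev.mem_uIoo hy hvw.symm)

theorem curve_lt_iff_curve_lt_of_isCycleEnum {n : ℕ} {e : Fin n ≃ V} (hcyc : IsCycleEnum G e)
    (hlev : IsTwoLevel G h b t) (hy : y ∈ Ioo b t) {E F₁ F₂ : Sym2 V} (hE : E ∈ G.edgeSet)
    (hEc : D.edgeCrossings E = ∅) (hF₁ : F₁ ∈ G.edgeSet) (hF₂ : F₂ ∈ G.edgeSet)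
    (h₁ : F₁ ≠ E) (h₂ : F₂ ≠ E) :
    D.curve E y < D.curve F₁ y ↔ D.curve E y < D.curve F₂ y := by
  have : NeZero n := ⟨(e.symm E.out.1).pos.ne'⟩
  obtain ⟨i, rfl⟩ := hcyc.exists_eq_mk hE
  obtain ⟨k₁, rfl⟩ := hcyc.exists_eq_mk hF₁
  obtain ⟨k₂, rfl⟩ := hcyc.exists_eq_mk hF₂
  refine Fin.iff_of_forall_iff_add_one (P := fun k => D.curve s(e i, e (i + 1)) y <
    D.curve s(e k, e (k + 1)) y) i (fun k hki hk₁i => ?_) (by rintro rfl; exact h₁ rfl)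
    (by rintro rfl; exact h₂ rfl)
  have hoff : e (k + 1) ∉ s(e i, e (i + 1)) := by
    simp only [Sym2.mem_iff, e.apply_eq_iff_eq, add_left_inj]
    tauto
  rw [Sym2.eq_swap (a := e k)]
  exact D.curve_lt_iff_curve_lt_of_adj hlev hy hE hEc hoff
    ((hcyc.adj_iff _ _).mpr (Or.inr rfl)) ((hcyc.adj_iff _ _).mpr (Or.inl rfl))

end TwoLevel

end ReebDrawing

theorem alternating_cycle_at_most_two_uncrossed_edges_general
    {V : Type*} (G : SimpleGraph V) (h : V → ℝ)
    (m : ℕ) (e : Fin (2 * m) ≃ V) (hcyc : IsCycleEnum G e)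
    (b t : ℝ) (hbt : b < t)
    (hh : ∀ i : Fin (2 * m), h (e i) = if i.val % 2 = 0 then t else b) :
    ∀ D : ReebDrawing G h,
      {e₀ ∈ G.edgeSet | D.edgeCrossings e₀ = ∅}.encard ≤ 2 := by
  intro D
  have hlev : IsTwoLevel G h b t := hcyc.isTwoLevel hh
  have hy : (b + t) / 2 ∈ Ioo b t := ⟨by linarith, by linarith⟩
  refine encard_le_two_of_forall_lt_iff_lt (f := fun E => D.curve E ((b + t) / 2)) ?_ ?_
  · rintro E₁ ⟨hE₁, -⟩ E₂ ⟨hE₂, hE₂c⟩ heq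
    by_contra hne
    exact D.curve_ne_of_isTwoLevel hlev hy hE₂ hE₂c hE₁ hne heq.symm
  · rintro E ⟨hE, hEc⟩ F₁ ⟨hF₁, -⟩ F₂ ⟨hF₂, -⟩ h₁ h₂
    exact D.curve_lt_iff_curve_lt_of_isCycleEnum hcyc hlev hy hE hEc hF₁ hF₂ h₁ h₂

/-- Let `(G, h)` be a Reeb graph such that `G` is a cycle with
`n = 2 * m` vertices (`n` even, `n ≥ 6`) whose heights alternate along the cycle
between two values `b < t`. Then in every drawing of `(G, h)`, at most two edges of
the cycle are involved in no crossing. -/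
theorem alternating_cycle_at_most_two_uncrossed_edges
    {V : Type*} [Fintype V] (G : SimpleGraph V) (h : V → ℝ)
    (m : ℕ) (hm : 3 ≤ m) (e : Fin (2 * m) ≃ V) (hcyc : IsCycleEnum G e)
    (b t : ℝ) (hbt : b < t)
    (hh : ∀ i : Fin (2 * m), h (e i) = if i.val % 2 = 0 then t else b) :
    ∀ D : ReebDrawing G h,
      {e₀ ∈ G.edgeSet | D.edgeCrossings e₀ = ∅}.encard ≤ 2 :=
  alternating_cycle_at_most_two_uncrossed_edges_general G h m e hcyc b t hbt hh
end
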